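/- Let F be a sparseness measure with cost function J on ℝⁿ, let 0 < q ≤ 1, and suppose that either lim_{x→0⁺} F(x)/x^q or lim_{x→∞} F(x)/x^q exists and is positive. Let k ≥ 1 and let ν be a linear subspace of ℝⁿ satisfying NSP at sparsity k for J. Then for every z ∈ ν with z ≠ 0 and every T ⊆ {1,…,n} with |T| ≤ k, one has ∑_{i∈T} |z_i|^q ≤ ∑_{i∉T} |z_i|^q. (Thus null spaces satisfying the exact recovery condition for J lie in the closure of those satisfying it for the ℓ_q cost function.) -/

import Mathlib

noncomputable section

/-- `F : ℝ → ℝ` is a sparseness measure: nonnegative on `[0,∞)`,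
vanishing exactly at `0`, and `F (|·|)` is subadditive on `ℝ`. -/
def SparsenessMeasure (F : ℝ → ℝ) : Prop :=
  (∀ t : ℝ, 0 ≤ t → 0 ≤ F t) ∧
  (∀ t : ℝ, 0 ≤ t → (F t = 0 ↔ t = 0)) ∧
  (∀ x y : ℝ, F |x + y| ≤ F |x| + F |y|)

/-- The cost function `J(x) = ∑ i, F |x i|` on `ℝⁿ`. -/
def costJ {n : ℕ} (F : ℝ → ℝ) (x : EuclideanSpace ℝ (Fin n)) : ℝ :=
  ∑ i, F |x i|

/-- The restricted cost `J(x_T) = ∑ i ∈ T, F |x i|`. -/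
def costJT {n : ℕ} (F : ℝ → ℝ) (T : Finset (Fin n)) (x : EuclideanSpace ℝ (Fin n)) : ℝ :=
  ∑ i ∈ T, F |x i|

/-- `x` has at most `k` nonzero entries. -/
def Sparse {n : ℕ} (k : ℕ) (x : EuclideanSpace ℝ (Fin n)) : Prop :=
  ∃ T : Finset (Fin n), T.card ≤ k ∧ ∀ i ∉ T, x i = 0

/-- The matrix `A` acting as a continuous linear map between Euclidean spaces. -/
def mulVecCLM {m n : ℕ} (A : Matrix (Fin m) (Fin n) ℝ) :
    EuclideanSpace ℝ (Fin n) →L[ℝ] EuclideanSpace ℝ (Fin m) :=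
  (((EuclideanSpace.equiv (Fin m) ℝ).symm : (Fin m → ℝ) →L[ℝ] EuclideanSpace ℝ (Fin m)).comp
    (Matrix.mulVecLin A).toContinuousLinearMap).comp
    ((EuclideanSpace.equiv (Fin n) ℝ) : EuclideanSpace ℝ (Fin n) →L[ℝ] (Fin n → ℝ))

/-- `A` satisfies the robust recovery condition at sparsity `k` for the cost `J_F`
with constant `C`: for every `k`-sparse `x̄`, every `ε > 0`, every noise `v` with
`‖v‖ ≤ ε`, and every feasible `x̂` with `J(x̂) ≤ J(x̄)`, one has `‖x̄ - x̂‖ ≤ C ε`. -/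
def RRC {m n : ℕ} (A : Matrix (Fin m) (Fin n) ℝ) (k : ℕ) (F : ℝ → ℝ) (C : ℝ) : Prop :=
  ∀ xbar : EuclideanSpace ℝ (Fin n), Sparse k xbar →
    ∀ ε : ℝ, 0 < ε →
      ∀ v : EuclideanSpace ℝ (Fin m), ‖v‖ ≤ ε →
        ∀ xhat : EuclideanSpace ℝ (Fin n),
          ‖mulVecCLM A xhat - (mulVecCLM A xbar + v)‖ ≤ ε →
            costJ F xhat ≤ costJ F xbar → ‖xbar - xhat‖ ≤ C * ε

/-- The robust null space condition with parameter `d` for `(A, k, J_F)`. -/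
def RNSP {m n : ℕ} (A : Matrix (Fin m) (Fin n) ℝ) (k : ℕ) (F : ℝ → ℝ) (d : ℝ) : Prop :=
  ∀ z ∈ LinearMap.ker (mulVecCLM A : EuclideanSpace ℝ (Fin n) →ₗ[ℝ] EuclideanSpace ℝ (Fin m)), z ≠ 0 →
    ∀ η : EuclideanSpace ℝ (Fin n), ‖η‖ < d * ‖z‖ →
      ∀ T : Finset (Fin n), T.card ≤ k →
        costJT F T (z + η) < costJT F Tᶜ (z + η)

/-- The subspace `ν` satisfies the null space property at sparsity `k` for `J_F`. -/
def NSP {n : ℕ} (ν : Submodule ℝ (EuclideanSpace ℝ (Fin n))) (k : ℕ) (F : ℝ → ℝ) : Prop :=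
  ∀ z ∈ ν, z ≠ 0 → ∀ T : Finset (Fin n), T.card ≤ k → costJT F T z < costJT F Tᶜ z

/-- The orthogonal projection onto `ν`, as a continuous linear map `ℝⁿ → ℝⁿ`. -/
def projCLM {n : ℕ} (ν : Submodule ℝ (EuclideanSpace ℝ (Fin n))) :
    EuclideanSpace ℝ (Fin n) →L[ℝ] EuclideanSpace ℝ (Fin n) :=
  ν.subtypeL.comp (Submodule.orthogonalProjectionOnto ν)

/-!
Along a filter of positive scales `t` on which `F x / x ^ q → L > 0` (either `t → 0⁺` or
`t → ∞`), `F |t x| / t ^ q → L |x| ^ q`. Applying the null space property to the rescaled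
vectors `t • z ∈ ν`, dividing by `t ^ q` and passing to the limit turns the strict inequality
for `J` into the non-strict one for the `ℓ_q` cost.
-/

open Filter Topology

section ScalingLimit

variable {F : ℝ → ℝ} {q L : ℝ} {l : Filter ℝ}

theorem tendsto_comp_mul_const_div_rpow (hlim : Tendsto (fun x => F x / x ^ q) l (𝓝 L))
    (hpos : ∀ᶠ t in l, 0 < t) {c : ℝ} (hc : 0 < c) (hscale : Tendsto (· * c) l l) :
    Tendsto (fun t => F (t * c) / t ^ q) l (𝓝 (L * c ^ q)) := by
  refine ((hlim.comp hscale).mul_const (c ^ q)).congr' ?_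
  filter_upwards [hpos] with t ht
  rw [Function.comp_apply, Real.mul_rpow ht.le hc.le, ← div_div,
    div_mul_cancel₀ _ (Real.rpow_pos_of_pos hc q).ne']

theorem tendsto_sum_abs_mul_div_rpow {ι : Type*} (hF0 : F 0 = 0) (hq : 0 < q)
    (hlim : Tendsto (fun x => F x / x ^ q) l (𝓝 L)) (hpos : ∀ᶠ t in l, 0 < t)
    (hscale : ∀ c, 0 < c → Tendsto (· * c) l l) (S : Finset ι) (z : ι → ℝ) :
    Tendsto (fun t => (∑ i ∈ S, F |t * z i|) / t ^ q) l (𝓝 (L * ∑ i ∈ S, |z i| ^ q)) := by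
  simp only [Finset.sum_div, Finset.mul_sum]
  refine tendsto_finsetSum _ fun i _ => ?_
  rcases eq_or_ne (z i) 0 with hzi | hzi
  · simpa [hzi, hF0, Real.zero_rpow hq.ne'] using tendsto_const_nhds
  · have hc : 0 < |z i| := abs_pos.mpr hzi
    refine (tendsto_comp_mul_const_div_rpow hlim hpos hc (hscale _ hc)).congr' ?_
    filter_upwards [hpos] with t ht
    rw [abs_mul, abs_of_pos ht]

theorem sum_rpow_le_of_eventually_sum_le [l.NeBot] {ι : Type*} (hF0 : F 0 = 0) (hq : 0 < q)
    (hL : 0 < L) (hlim : Tendsto (fun x => F x / x ^ q) l (𝓝 L)) (hpos : ∀ᶠ t in l, 0 < t)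
    (hscale : ∀ c, 0 < c → Tendsto (· * c) l l) {S T : Finset ι} {z : ι → ℝ}
    (hle : ∀ᶠ t in l, ∑ i ∈ S, F |t * z i| ≤ ∑ i ∈ T, F |t * z i|) :
    ∑ i ∈ S, |z i| ^ q ≤ ∑ i ∈ T, |z i| ^ q := by
  have hdiv : ∀ᶠ t in l, (∑ i ∈ S, F |t * z i|) / t ^ q ≤ (∑ i ∈ T, F |t * z i|) / t ^ q := by
    filter_upwards [hle, hpos] with t hle ht
    exact div_le_div_of_nonneg_right hle (Real.rpow_nonneg ht.le q)
  have hlimit := le_of_tendsto_of_tendsto (tendsto_sum_abs_mul_div_rpow hF0 hq hlim hpos hscale S z)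
    (tendsto_sum_abs_mul_div_rpow hF0 hq hlim hpos hscale T z) hdiv
  exact le_of_mul_le_mul_left hlimit hL

end ScalingLimit

theorem tendsto_mul_const_nhdsGT_zero {c : ℝ} (hc : 0 < c) :
    Tendsto (· * c) (𝓝[>] (0 : ℝ)) (𝓝[>] 0) := by
  have h : Tendsto (c * ·) (comap (c * ·) (𝓝[>] (0 : ℝ))) (𝓝[>] 0) := tendsto_comap
  rw [comap_mulLeft_nhdsGT_zero hc] at h
  simpa only [mul_comm c] using h

theorem NSP.sum_rpow_le {n k : ℕ} {F : ℝ → ℝ} {ν : Submodule ℝ (EuclideanSpace ℝ (Fin n))}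
    (hν : NSP ν k F) (hF0 : F 0 = 0) {q L : ℝ} (hq : 0 < q) (hL : 0 < L) {l : Filter ℝ}
    [l.NeBot] (hlim : Tendsto (fun x => F x / x ^ q) l (𝓝 L)) (hpos : ∀ᶠ t in l, 0 < t)
    (hscale : ∀ c, 0 < c → Tendsto (· * c) l l) {z : EuclideanSpace ℝ (Fin n)} (hz : z ∈ ν)
    (hz0 : z ≠ 0) {T : Finset (Fin n)} (hT : T.card ≤ k) :
    ∑ i ∈ T, |z i| ^ q ≤ ∑ i ∈ Tᶜ, |z i| ^ q := by
  refine sum_rpow_le_of_eventually_sum_le hF0 hq hL hlim hpos hscale ?_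
  filter_upwards [hpos] with t ht
  exact (hν (t • z) (ν.smul_mem t hz) (smul_ne_zero ht.ne' hz0) T hT).le

theorem stmt16_general {n : ℕ} (F : ℝ → ℝ) (hF : SparsenessMeasure F)
    (q : ℝ) (hq0 : 0 < q)
    (hlim : (∃ L : ℝ, 0 < L ∧ Filter.Tendsto (fun x : ℝ => F x / x ^ q)
        (nhdsWithin 0 (Set.Ioi 0)) (nhds L)) ∨
      (∃ L : ℝ, 0 < L ∧ Filter.Tendsto (fun x : ℝ => F x / x ^ q)
        Filter.atTop (nhds L)))
    (k : ℕ)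
    (ν : Submodule ℝ (EuclideanSpace ℝ (Fin n))) (hν : NSP ν k F) :
    ∀ z ∈ ν, z ≠ 0 → ∀ T : Finset (Fin n), T.card ≤ k →
      ∑ i ∈ T, |z i| ^ q ≤ ∑ i ∈ Tᶜ, |z i| ^ q := by
  intro z hz hz0 T hT
  have hF0 : F 0 = 0 := (hF.2.1 0 le_rfl).mpr rfl
  rcases hlim with ⟨L, hL, hlim⟩ | ⟨L, hL, hlim⟩
  · exact hν.sum_rpow_le hF0 hq0 hL hlim self_mem_nhdsWithin
      (fun _ hc => tendsto_mul_const_nhdsGT_zero hc) hz hz0 hT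
  · exact hν.sum_rpow_le hF0 hq0 hL hlim (eventually_gt_atTop 0)
      (fun _ hc => tendsto_id.atTop_mul_const hc) hz hz0 hT

/-- Lemma in Appendix H: if `F` is a sparseness measure, `0 < q ≤ 1`,
and `F(x)/x^q` has a positive limit as `x → 0⁺` or as `x → ∞`, then every subspace
satisfying NSP at sparsity `k` for `J_F` satisfies the closed `ℓ_q` null space
inequality: `∑_{i ∈ T} |z i|^q ≤ ∑_{i ∉ T} |z i|^q` for nonzero `z ∈ ν` and `|T| ≤ k`. -/
theorem stmt16 {n : ℕ} (F : ℝ → ℝ) (hF : SparsenessMeasure F)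
    (q : ℝ) (hq0 : 0 < q) (hq1 : q ≤ 1)
    (hlim : (∃ L : ℝ, 0 < L ∧ Filter.Tendsto (fun x : ℝ => F x / x ^ q)
        (nhdsWithin 0 (Set.Ioi 0)) (nhds L)) ∨
      (∃ L : ℝ, 0 < L ∧ Filter.Tendsto (fun x : ℝ => F x / x ^ q)
        Filter.atTop (nhds L)))
    (k : ℕ) (hk : 1 ≤ k)
    (ν : Submodule ℝ (EuclideanSpace ℝ (Fin n))) (hν : NSP ν k F) :
    ∀ z ∈ ν, z ≠ 0 → ∀ T : Finset (Fin n), T.card ≤ k →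
      ∑ i ∈ T, |z i| ^ q ≤ ∑ i ∈ Tᶜ, |z i| ^ q :=
  stmt16_general F hF q hq0 hlim k ν hν
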